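/- Let A be a square singular matrix over a field F and let A⁻ be any von Neumann inverse of A. Then i(A²A⁻ + I − AA⁻) = i(A + I − AA⁻) = i(A⁻A² + I − A⁻A) = i(A + I − A⁻A) = i(A) − 1. -/

import Mathlib

open Matrix Polynomial

/-- The Drazin index of a square matrix: the smallest natural number `k`
such that `rank (A ^ k) = rank (A ^ (k+1))`. -/
noncomputable def drazinIndex {n : Type*} [Fintype n] [DecidableEq n]
    {F : Type*} [Field F] (A : Matrix n n F) : ℕ :=
  sInf {k : ℕ | (A ^ k).rank = (A ^ (k + 1)).rank}

/-- `X` is the Drazin inverse of `A`: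
`A^(k+1) * X = A^k`, `X * A * X = X`, `A * X = X * A` with `k = drazinIndex A`. -/
def IsDrazinInverse {n : Type*} [Fintype n] [DecidableEq n]
    {F : Type*} [Field F] (A X : Matrix n n F) : Prop :=
  A ^ (drazinIndex A + 1) * X = A ^ drazinIndex A ∧ X * A * X = X ∧ A * X = X * A

/-! Put `E = A * Am`: it is idempotent, `E * A = A` and `rank E = rank A`. Each matrix
`B = M + 1 - E` in question satisfies `(1 - E) * B = 1 - E` and `B * E = A * E`, hence
`(1 - E) * B ^ k = 1 - E` and `B ^ k * E = A ^ k * E = A ^ (k + 1) * Am`. The first identity puts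
`ker (B ^ k)` inside `range E`, which is the equality case of Sylvester's rank inequality:
`rank (B ^ k) + rank E = n + rank (B ^ k * E)`. So `rank (B ^ k) = n - rank A + rank (A ^ (k + 1))`:
the rank sequence of `B` is that of `A` shifted by one, and as `A` is singular the index drops by
exactly one. The two matrices built from `Am * A` are transposes of matrices of the first kind. -/

theorem Nat.sInf_succ_eq_sInf_sub_one {p : ℕ → Prop} (h0 : ¬ p 0) :
    sInf {m | p (m + 1)} = sInf {m | p m} - 1 := by
  rcases {m | p m}.eq_empty_or_nonempty with hemp | hne
  · have hemp' : {m | p (m + 1)} = ∅ := Set.eq_empty_of_forall_notMem fun m hm ↦ hemp.subset hm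
    rw [hemp, hemp', Nat.sInf_empty]
  · have h1 : 1 ≤ sInf {m | p m} := Nat.one_le_iff_ne_zero.2 fun h ↦ h0 (h ▸ Nat.sInf_mem hne)
    have := Nat.sInf_add h1
    omega

namespace Matrix

variable {m n o F : Type*} [Fintype n] [Fintype o] [Field F]

theorem rank_mul_add_card_eq_of_ker_le_range {B : Matrix m n F} {E : Matrix n o F}
    (h : LinearMap.ker B.mulVecLin ≤ LinearMap.range E.mulVecLin) :
    (B * E).rank + Fintype.card n = B.rank + E.rank := by
  have hE := (B.mulVecLin.domRestrict (LinearMap.range E.mulVecLin)).finrank_range_add_finrank_ker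
  rw [LinearMap.range_domRestrict, LinearMap.ker_domRestrict,
    (Submodule.comapSubtypeEquivOfLe h).finrank_eq] at hE
  have hB := B.mulVecLin.finrank_range_add_finrank_ker
  rw [Module.finrank_fintype_fun_eq_card] at hB
  rw [rank, rank, rank, mulVecLin_mul, LinearMap.range_comp]
  omega

theorem rank_mul_mul_eq_of_mul_mul_eq {A Am : Matrix n n F} (hAm : A * Am * A = A)
    (X : Matrix m n F) : (X * A * Am).rank = (X * A).rank := by
  refine le_antisymm (rank_mul_le_left _ _) ?_
  calc (X * A).rank = (X * A * Am * A).rank := by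
        rw [Matrix.mul_assoc (X * A), Matrix.mul_assoc X, ← mul_assoc A, hAm]
    _ ≤ (X * A * Am).rank := rank_mul_le_left _ _

variable [DecidableEq n]

theorem isUnit_of_rank_eq_card {A : Matrix n n F} (h : A.rank = Fintype.card n) :
    IsUnit A := by
  rw [← mulVec_surjective_iff_isUnit, ← coe_mulVecLin, ← LinearMap.range_eq_top]
  exact Submodule.eq_top_of_finrank_eq (h.trans (Module.finrank_fintype_fun_eq_card F).symm)

theorem ker_mulVecLin_le_range_of_one_sub_mul_eq {B E : Matrix n n F} (h : (1 - E) * B = 1 - E) :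
    LinearMap.ker B.mulVecLin ≤ LinearMap.range E.mulVecLin := by
  intro x hx
  rw [LinearMap.mem_ker, mulVecLin_apply] at hx
  have hx' : (1 - E) *ᵥ x = 0 := by rw [← h, ← mulVec_mulVec, hx, mulVec_zero]
  rw [sub_mulVec, one_mulVec, sub_eq_zero] at hx'
  exact ⟨x, hx'.symm⟩

theorem one_sub_mul_pow_eq {B E : Matrix n n F} (h : (1 - E) * B = 1 - E) (k : ℕ) :
    (1 - E) * B ^ k = 1 - E := by
  induction k with
  | zero => rw [pow_zero, mul_one]
  | succ k ih => rw [pow_succ, ← mul_assoc, ih, h]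

theorem pow_mul_eq_pow_mul {A B E : Matrix n n F} (hBE : B * E = A * E) (hEA : E * A = A)
    (k : ℕ) : B ^ k * E = A ^ k * E := by
  induction k with
  | zero => rfl
  | succ k ih =>
    calc B ^ (k + 1) * E = B ^ k * (B * E) := by rw [pow_succ, mul_assoc]
      _ = B ^ k * E * (A * E) := by rw [hBE, mul_assoc, ← mul_assoc E, hEA]
      _ = A ^ (k + 1) * E := by rw [ih, mul_assoc, ← mul_assoc E, hEA, ← mul_assoc, ← pow_succ]

theorem rank_pow_add_rank_eq {A Am : Matrix n n F} (hAm : A * Am * A = A) {B : Matrix n n F}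
    (hB : (1 - A * Am) * B = 1 - A * Am) (hBE : B * (A * Am) = A * (A * Am)) (k : ℕ) :
    (B ^ k).rank + A.rank = Fintype.card n + (A ^ (k + 1)).rank := by
  have key := rank_mul_add_card_eq_of_ker_le_range
    (ker_mulVecLin_le_range_of_one_sub_mul_eq (one_sub_mul_pow_eq hB k))
  have hE := rank_mul_mul_eq_of_mul_mul_eq hAm (1 : Matrix n n F)
  rw [one_mul] at hE
  rw [pow_mul_eq_pow_mul hBE hAm, ← mul_assoc, rank_mul_mul_eq_of_mul_mul_eq hAm,
    ← pow_succ] at key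
  omega

end Matrix

section DrazinIndex

variable {n F : Type*} [Fintype n] [DecidableEq n] [Field F]

theorem drazinIndex_transpose (A : Matrix n n F) : drazinIndex Aᵀ = drazinIndex A := by
  simp only [drazinIndex, ← transpose_pow, rank_transpose]

theorem drazinIndex_eq_sub_one_of_rank_pow {A B : Matrix n n F} (hA : ¬IsUnit A)
    (h : ∀ k, (B ^ k).rank + A.rank = Fintype.card n + (A ^ (k + 1)).rank) :
    drazinIndex B = drazinIndex A - 1 := by
  have h0 : (A ^ 0).rank ≠ (A ^ (0 + 1)).rank := by
    rw [pow_zero, zero_add, pow_one, rank_one]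
    exact fun hA' ↦ hA (isUnit_of_rank_eq_card hA'.symm)
  have hset : {k | (B ^ k).rank = (B ^ (k + 1)).rank} =
      {k | (A ^ (k + 1)).rank = (A ^ (k + 1 + 1)).rank} := by
    ext k
    have := h k
    have := h (k + 1)
    simp only [Set.mem_ofPred_eq]
    omega
  rw [drazinIndex, hset]
  exact Nat.sInf_succ_eq_sInf_sub_one (p := fun k ↦ (A ^ k).rank = (A ^ (k + 1)).rank) h0

variable {A Am : Matrix n n F}

theorem drazinIndex_add_one_sub_mul (hA : ¬IsUnit A) (hAm : A * Am * A = A) {M : Matrix n n F}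
    (hM : A * Am * M = M) (hMA : M * (A * Am) = A * (A * Am)) :
    drazinIndex (M + 1 - A * Am) = drazinIndex A - 1 := by
  have hE : A * Am * (A * Am) = A * Am := by rw [← mul_assoc, hAm]
  refine drazinIndex_eq_sub_one_of_rank_pow hA (rank_pow_add_rank_eq hAm ?_ ?_)
  · simp only [sub_mul, mul_sub, mul_add, one_mul, mul_one, hM, hE]
    abel
  · simp only [sub_mul, add_mul, one_mul, hMA, hE]
    abel

theorem drazinIndex_mul_mul_add_one_sub_and_add_one_sub (hA : ¬IsUnit A) (hAm : A * Am * A = A) :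
    drazinIndex (A * A * Am + 1 - A * Am) = drazinIndex A - 1 ∧
    drazinIndex (A + 1 - A * Am) = drazinIndex A - 1 := by
  have hM : A * Am * (A * A * Am) = A * A * Am := by simp only [← mul_assoc, hAm]
  have hMA : A * A * Am * (A * Am) = A * (A * Am) := by
    rw [show A * A * Am * (A * Am) = A * (A * Am * A) * Am by simp only [mul_assoc], hAm, mul_assoc]
  exact ⟨drazinIndex_add_one_sub_mul hA hAm hM hMA, drazinIndex_add_one_sub_mul hA hAm hAm rfl⟩

end DrazinIndex

/-- for a singular `A` and any von Neumann inverse `A⁻`,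
`i(A²A⁻+I−AA⁻) = i(A+I−AA⁻) = i(A⁻A²+I−A⁻A) = i(A+I−A⁻A) = i(A) − 1`. -/
theorem four_indices_eq {F : Type*} [Field F] {n : ℕ}
    (A Am : Matrix (Fin n) (Fin n) F)
    (hsing : ¬ IsUnit A) (hAm : A * Am * A = A) :
    drazinIndex (A * A * Am + 1 - A * Am) = drazinIndex A - 1 ∧
    drazinIndex (A + 1 - A * Am) = drazinIndex A - 1 ∧
    drazinIndex (Am * A * A + 1 - Am * A) = drazinIndex A - 1 ∧
    drazinIndex (A + 1 - Am * A) = drazinIndex A - 1 := by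
  obtain ⟨h1, h2⟩ := drazinIndex_mul_mul_add_one_sub_and_add_one_sub hsing hAm
  have hAmT : Aᵀ * Amᵀ * Aᵀ = Aᵀ := by rw [← transpose_mul, ← transpose_mul, ← mul_assoc, hAm]
  obtain ⟨h3, h4⟩ := drazinIndex_mul_mul_add_one_sub_and_add_one_sub
    ((isUnit_transpose A).not.2 hsing) hAmT
  refine ⟨h1, h2, ?_, ?_⟩ <;> rw [← drazinIndex_transpose, ← drazinIndex_transpose A]
  · simpa only [transpose_sub, transpose_add, transpose_one, transpose_mul, mul_assoc] using h3
  · simpa only [transpose_sub, transpose_add, transpose_one, transpose_mul] using h4
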